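/- Fix a balanced σ ∈ {±1}^n and let ℋ be sampled from HSBM(n,p,q;k) conditionally on σ, with W = W(ℋ). Then Π (E L_Γ) Π = ((p−q)/2) · n · C(n/2 − 2, k−2) · Π, where E denotes expectation over ℋ given σ. Consequently, the third-smallest eigenvalue of Π (E L_Γ) Π equals ((k−1)/2^{k−1})(α−β) log n + o(log n). -/

import Mathlib

open Finset Filter Matrix

open scoped Classical

/-- The `k`-element subsets of `[n]`, i.e. the potential hyperedges. -/
abbrev KSet (n k : ℕ) := {e : Finset (Fin n) // e.card = k}

/-- A `±1` label vector (encoded by `Bool`) is balanced if it has equally many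
`+1`'s (`true`) and `-1`'s (`false`). -/
abbrev balanced {n : ℕ} (σ : Fin n → Bool) : Prop :=
  2 * (Finset.univ.filter (fun i => σ i = true)).card = n

/-- `e` is in-cluster w.r.t. `σ`: `σ` is constant on `e`. -/
abbrev inCluster {n : ℕ} (σ : Fin n → Bool) (e : Finset (Fin n)) : Prop :=
  ∀ i ∈ e, ∀ j ∈ e, σ i = σ j

/-- Probability that `e` appears as an edge, given the labels `σ`. -/
noncomputable def edgeP {n : ℕ} (p q : ℝ) (σ : Fin n → Bool) (e : Finset (Fin n)) : ℝ :=
  if inCluster σ e then p else q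

/-- Probability of observing exactly the hypergraph with edge-indicator `E`, given labels `σ`
(edges appear independently). -/
noncomputable def hypProb {n k : ℕ} (p q : ℝ) (σ : Fin n → Bool) (E : KSet n k → Bool) : ℝ :=
  ∏ e : KSet n k, if E e then edgeP p q σ e.1 else 1 - edgeP p q σ e.1

/-- Uniform prior on balanced label vectors. -/
noncomputable def sigProb (n : ℕ) (σ : Fin n → Bool) : ℝ :=
  if balanced σ then 1 / ((Finset.univ.filter (fun τ : Fin n → Bool => balanced τ)).card : ℝ)
  else 0

/-- Probability of an event `P` under the joint law `HSBM(n,p,q;k)` of `(σ, ℋ)`. -/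
noncomputable def prEvent (n k : ℕ) (p q : ℝ)
    (P : (Fin n → Bool) → (KSet n k → Bool) → Prop) : ℝ :=
  ∑ σ : Fin n → Bool, ∑ E : KSet n k → Bool,
    sigProb n σ * hypProb p q σ E * (if P σ E then 1 else 0)

/-- Global sign flip. -/
def negB {n : ℕ} (σ : Fin n → Bool) : Fin n → Bool := fun i => !(σ i)

/-- The edge probability parameter `α · log n / C(n-1, k-1)`. -/
noncomputable def pParam (k : ℕ) (α : ℝ) (n : ℕ) : ℝ :=
  α * Real.log n / ((n - 1).choose (k - 1) : ℝ)

/-- The real `±1` vector associated to a Boolean label vector. -/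
def sgn {n : ℕ} (σ : Fin n → Bool) : Fin n → ℝ := fun i => if σ i then 1 else -1

/-- The rank-one matrix `σσᵀ`. -/
noncomputable def outer {n : ℕ} (σ : Fin n → Bool) : Matrix (Fin n) (Fin n) ℝ :=
  Matrix.of fun i j => sgn σ i * sgn σ j

/-- The weighted adjacency matrix `W(H)`: `W i j` is the number of hyperedges containing
both `i` and `j` (zero on the diagonal). -/
noncomputable def Wmat {n k : ℕ} (E : KSet n k → Bool) : Matrix (Fin n) (Fin n) ℝ :=
  Matrix.of fun i j => if i = j then 0 else
    ((Finset.univ.filter (fun e : KSet n k => E e = true ∧ i ∈ e.1 ∧ j ∈ e.1)).card : ℝ)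

/-- Feasibility for the SDP relaxation: `X ⪰ 0`, unit diagonal, `⟨X, 𝟙𝟙ᵀ⟩ = 0`. -/
def sdpFeasible {n : ℕ} (X : Matrix (Fin n) (Fin n) ℝ) : Prop :=
  X.PosSemidef ∧ (∀ i, X i i = 1) ∧ (∑ i, ∑ j, X i j) = 0

/-- The SDP objective `⟨W, X⟩`. -/
noncomputable def sdpObj {n : ℕ} (W X : Matrix (Fin n) (Fin n) ℝ) : ℝ :=
  ∑ i, ∑ j, W i j * X i j

/-- `Xs` is the unique optimal solution of the SDP with input `W`. -/
def sdpUniqueOpt {n : ℕ} (W Xs : Matrix (Fin n) (Fin n) ℝ) : Prop :=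
  sdpFeasible Xs ∧ ∀ X, sdpFeasible X → X ≠ Xs → sdpObj W X < sdpObj W Xs

/-- `Γ = diag(σ) W diag(σ)`. -/
noncomputable def GammaM {n : ℕ} (σ : Fin n → Bool) (W : Matrix (Fin n) (Fin n) ℝ) :
    Matrix (Fin n) (Fin n) ℝ :=
  Matrix.diagonal (sgn σ) * W * Matrix.diagonal (sgn σ)

/-- The Laplacian `L_Γ = diag(Γ𝟙) - Γ`. -/
noncomputable def LGamma {n : ℕ} (σ : Fin n → Bool) (W : Matrix (Fin n) (Fin n) ℝ) :
    Matrix (Fin n) (Fin n) ℝ :=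
  Matrix.diagonal (fun i => ∑ j, GammaM σ W i j) - GammaM σ W

/-- `Π = I - (1/n)𝟙𝟙ᵀ - (1/n)σσᵀ`, the projector onto `span{𝟙, σ}ᗮ`. -/
noncomputable def PiM {n : ℕ} (σ : Fin n → Bool) : Matrix (Fin n) (Fin n) ℝ :=
  1 - (n : ℝ)⁻¹ • Matrix.of (fun _ _ => (1 : ℝ)) - (n : ℝ)⁻¹ • outer σ

/-- The third-smallest eigenvalue of a symmetric matrix, via the Courant–Fischer
max–min characterization over subspaces of dimension `n - 2`. -/
noncomputable def lambda3 {n : ℕ} (M : Matrix (Fin n) (Fin n) ℝ) : ℝ :=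
  sSup {r : ℝ | ∃ V : Submodule ℝ (Fin n → ℝ), Module.finrank ℝ V = n - 2 ∧
    ∀ x ∈ V, r * (∑ i, x i ^ 2) ≤ x ⬝ᵥ M.mulVec x}

/-- The expectation `E L_Γ` of the Laplacian `L_Γ` over `ℋ` sampled conditionally on `σ`. -/
noncomputable def expLGamma (n k : ℕ) (p q : ℝ) (σ : Fin n → Bool) :
    Matrix (Fin n) (Fin n) ℝ :=
  ∑ E : KSet n k → Bool, hypProb p q σ E • LGamma σ (Wmat E)


/-!
Edges are independent, so `(E W)ᵢⱼ` is the total probability of the `k`-sets containing `i` and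
`j`: for `i ≠ j` it is `q C(n-2,k-2) + [σᵢ = σⱼ] B` with `B = (p-q) C(n/2-2,k-2)`. Thus `E W`
lies in the span of `𝟙𝟙ᵀ`, `σσᵀ` and `I`; as `L_Γ` is linear in `W` and `σ ⊥ 𝟙`, this gives
`E L_Γ = (B n/2) I - (B/2) 𝟙𝟙ᵀ - a σσᵀ` for some `a`, and `Π` kills the last two terms.

The matrix `c Π` acts as `c` on the `(n-2)`-dimensional space `span{𝟙, σ}ᗮ`, which meets every
other `(n-2)`-dimensional subspace once `n > 4`; so the max–min value `λ₃` is `c`. Finally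
`c / log n = (α-β) (n/2) C(n/2-2,k-2) / C(n-1,k-1) → (α-β)(k-1)/2^{k-1}`. Any two balanced
labellings differ by a relabelling of the vertices, under which `λ₃` is invariant, so the error
term depends on `n` only.
-/

section

variable {n m : ℕ} (σ : Fin n → Bool)

theorem sgn_mul_self (i : Fin n) : sgn σ i * sgn σ i = 1 := by
  cases h : σ i <;> simp [sgn, h]

theorem sgn_mul_sgn : sgn σ * sgn σ = 1 := funext (sgn_mul_self σ)

theorem sgn_dotProduct_sgn : sgn σ ⬝ᵥ sgn σ = n := by
  simp [dotProduct, sgn_mul_self]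

theorem card_filter_eq_of_balanced (hσ : balanced σ) (hn : n = 2 * m) (b : Bool) :
    #{l | σ l = b} = m := by
  have htot := Finset.card_filter_add_card_filter_not (s := univ) (p := fun l => σ l = true)
  rw [Finset.card_univ, Fintype.card_fin] at htot
  cases b
  · simp only [Bool.not_eq_true] at htot
    omega
  · omega

theorem sum_sgn_of_balanced (hσ : balanced σ) : ∑ l, sgn σ l = 0 := by
  have hfalse := card_filter_eq_of_balanced σ hσ hσ.symm false
  simp only [sgn, Finset.sum_ite, Finset.sum_const, nsmul_eq_mul, Bool.not_eq_true, hfalse]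
  ring

theorem inCluster_iff_subset {e : Finset (Fin n)} {i : Fin n} (hi : i ∈ e) :
    inCluster σ e ↔ e ⊆ univ.filter (fun l => σ l = σ i) := by
  constructor
  · intro h l hl
    simpa using h l hl i hi
  · intro h a ha b hb
    simp only [Finset.subset_iff, Finset.mem_filter, Finset.mem_univ, true_and] at h
    rw [h ha, h hb]

end

theorem exists_equiv_comp_eq_of_balanced {n : ℕ} {σ τ : Fin n → Bool} (hσ : balanced σ)
    (hτ : balanced τ) : ∃ e : Fin n ≃ Fin n, τ = σ ∘ e := by
  have hfiber : ∀ b, Fintype.card {a // τ a = b} = Fintype.card {a // σ a = b} := fun b => by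
    rw [Fintype.card_subtype, Fintype.card_subtype, card_filter_eq_of_balanced τ hτ hσ.symm b,
      card_filter_eq_of_balanced σ hσ hσ.symm b]
  refine ⟨Equiv.ofFiberEquiv fun b => Fintype.equivOfCardEq (hfiber b), ?_⟩
  funext a
  exact (Equiv.ofFiberEquiv_map _ a).symm

def halfLabel (m : ℕ) : Fin (2 * m) → Bool := fun i => decide ((i : ℕ) < m)

theorem balanced_halfLabel (m : ℕ) : balanced (halfLabel m) := by
  simp [balanced, halfLabel, Fin.card_filter_val_lt]
  omega

theorem sum_prod_bernoulli_mul_indicator {ι : Type*} [Fintype ι] [DecidableEq ι] (w : ι → ℝ)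
    (i₀ : ι) :
    ∑ E : ι → Bool, (∏ i, if E i then w i else 1 - w i) * (if E i₀ then 1 else 0) = w i₀ := by
  set f : ι → Bool → ℝ := fun i b =>
    (if b then w i else 1 - w i) * if i = i₀ then (if b then 1 else 0) else 1
  have hf : ∀ E : ι → Bool,
      (∏ i, if E i then w i else 1 - w i) * (if E i₀ then 1 else 0) = ∏ i, f i (E i) := by
    intro E
    simp only [f, Finset.prod_mul_distrib, Finset.prod_ite_eq', Finset.mem_univ, if_true]
  have hsum : ∀ i, ∑ b, f i b = if i = i₀ then w i₀ else 1 := by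
    intro i
    by_cases h : i = i₀ <;> simp [f, h]
  simp_rw [hf, ← Fintype.prod_sum, hsum, Finset.prod_ite_eq', Finset.mem_univ, if_true]

noncomputable def expW (n k : ℕ) (p q : ℝ) (σ : Fin n → Bool) : Matrix (Fin n) (Fin n) ℝ :=
  ∑ E : KSet n k → Bool, hypProb p q σ E • Wmat E

section

variable {n m k : ℕ} (p q : ℝ) (σ : Fin n → Bool)

theorem Wmat_apply_of_ne (E : KSet n k → Bool) {i j : Fin n} (hij : i ≠ j) :
    Wmat E i j = ∑ e : KSet n k, (if {i, j} ⊆ e.1 then 1 else 0) * (if E e then 1 else 0) := by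
  simp only [Wmat, of_apply, if_neg hij, Finset.card_filter, Nat.cast_sum, Nat.cast_ite,
    Nat.cast_one, Nat.cast_zero, Finset.insert_subset_iff, Finset.singleton_subset_iff]
  refine Finset.sum_congr rfl fun e _ => ?_
  by_cases hE : E e <;> simp [hE]

theorem expW_apply_of_ne {i j : Fin n} (hij : i ≠ j) :
    expW n k p q σ i j = ∑ e ∈ (powersetCard k univ).filter ({i, j} ⊆ ·), edgeP p q σ e := by
  have hmarg : ∀ e : KSet n k,
      ∑ E : KSet n k → Bool, hypProb p q σ E * (if E e then 1 else 0) = edgeP p q σ e.1 :=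
    sum_prod_bernoulli_mul_indicator (fun e : KSet n k => edgeP p q σ e.1)
  simp only [expW, Matrix.sum_apply, Matrix.smul_apply, smul_eq_mul, Wmat_apply_of_ne _ hij,
    Finset.mul_sum]
  rw [Finset.sum_comm]
  simp_rw [mul_left_comm (hypProb _ _ _ _), ← Finset.mul_sum, hmarg, boole_mul]
  rw [Finset.sum_filter, Finset.sum_subtype (powersetCard k univ) (fun _ => mem_powersetCard_univ)
    (fun e => if {i, j} ⊆ e then edgeP p q σ e else 0)]

theorem edgeP_eq_add (e : Finset (Fin n)) :
    edgeP p q σ e = q + if inCluster σ e then p - q else 0 := by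
  unfold edgeP
  split_ifs <;> ring

theorem card_filter_superset_pair_inCluster (hσ : balanced σ) (hn : n = 2 * m) (hk : 2 ≤ k)
    {i j : Fin n} (hij : i ≠ j) :
    #{e ∈ powersetCard k univ | {i, j} ⊆ e ∧ inCluster σ e}
      = if σ i = σ j then (m - 2).choose (k - 2) else 0 := by
  have hpair : #({i, j} : Finset (Fin n)) = 2 := Finset.card_pair hij
  split_ifs with hs
  · have hset : ({e ∈ powersetCard k univ | {i, j} ⊆ e ∧ inCluster σ e} : Finset (Finset (Fin n)))
        = {e ∈ powersetCard k (univ.filter (fun l => σ l = σ i)) | {i, j} ⊆ e} := by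
      ext e
      simp only [Finset.mem_filter, Finset.mem_powersetCard, Finset.subset_univ, true_and]
      constructor
      · rintro ⟨hcard, hij_e, hcl⟩
        exact ⟨⟨(inCluster_iff_subset σ (hij_e (by simp))).mp hcl, hcard⟩, hij_e⟩
      · rintro ⟨⟨hS, hcard⟩, hij_e⟩
        exact ⟨hcard, hij_e, (inCluster_iff_subset σ (hij_e (by simp))).mpr hS⟩
    have hsub : {i, j} ⊆ univ.filter (fun l => σ l = σ i) := by
      simp [Finset.insert_subset_iff, hs]
    rw [hset, Finset.card_filter_powersetCard_subset _ _ _ hsub (hpair ▸ hk), hpair,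
      card_filter_eq_of_balanced σ hσ hn]
  · rw [Finset.card_eq_zero, Finset.filter_eq_empty_iff]
    rintro e - ⟨hij_e, hcl⟩
    exact hs (hcl i (hij_e (by simp)) j (hij_e (by simp)))

theorem expW_apply_of_ne_of_balanced (hσ : balanced σ) (hn : n = 2 * m) (hk : 2 ≤ k)
    {i j : Fin n} (hij : i ≠ j) :
    expW n k p q σ i j = q * (n - 2).choose (k - 2)
      + if σ i = σ j then (p - q) * (m - 2).choose (k - 2) else 0 := by
  have hpair : #({i, j} : Finset (Fin n)) = 2 := Finset.card_pair hij
  have hall : #{e ∈ powersetCard k univ | {i, j} ⊆ e} = (n - 2).choose (k - 2) := by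
    rw [Finset.card_filter_powersetCard_subset _ _ _ (Finset.subset_univ _) (hpair ▸ hk), hpair,
      Finset.card_univ, Fintype.card_fin]
  rw [expW_apply_of_ne p q σ hij]
  simp only [edgeP_eq_add, Finset.sum_add_distrib, Finset.sum_const, nsmul_eq_mul, hall,
    ← Finset.sum_filter, Finset.filter_filter, card_filter_superset_pair_inCluster σ hσ hn hk hij]
  split_ifs <;> push_cast <;> ring

theorem expW_eq_of_balanced (hσ : balanced σ) (hn : n = 2 * m) (hk : 2 ≤ k) :
    expW n k p q σ
      = (q * (n - 2).choose (k - 2) + (p - q) * (m - 2).choose (k - 2) / 2) • vecMulVec 1 1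
        + ((p - q) * (m - 2).choose (k - 2) / 2) • vecMulVec (sgn σ) (sgn σ)
        - (q * (n - 2).choose (k - 2) + (p - q) * (m - 2).choose (k - 2)) • 1 := by
  ext i j
  simp only [Matrix.sub_apply, Matrix.add_apply, Matrix.smul_apply, vecMulVec_apply,
    Pi.one_apply, Matrix.one_apply, smul_eq_mul]
  by_cases hij : i = j
  · subst hij
    have hdiag : expW n k p q σ i i = 0 := by simp [expW, Wmat, Matrix.sum_apply]
    rw [hdiag, sgn_mul_self]
    simp only [if_true]
    ring
  · rw [expW_apply_of_ne_of_balanced p q σ hσ hn hk hij, if_neg hij]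
    cases hi : σ i <;> cases hj : σ j <;> simp [sgn, hi, hj] <;> ring

end

section

variable {n : ℕ} (σ : Fin n → Bool)

theorem GammaM_apply (W : Matrix (Fin n) (Fin n) ℝ) (i j : Fin n) :
    GammaM σ W i j = sgn σ i * W i j * sgn σ j := by
  simp [GammaM, Matrix.mul_diagonal, Matrix.diagonal_mul]

@[simps]
noncomputable def GammaLinearMap : Matrix (Fin n) (Fin n) ℝ →ₗ[ℝ] Matrix (Fin n) (Fin n) ℝ where
  toFun := GammaM σ
  map_add' W W' := by simp [GammaM, Matrix.mul_add, Matrix.add_mul]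
  map_smul' c W := by simp [GammaM]

theorem LGamma_eq (W : Matrix (Fin n) (Fin n) ℝ) :
    LGamma σ W = diagonal (GammaM σ W *ᵥ 1) - GammaM σ W := by
  simp only [LGamma]
  congr 2
  ext i
  simp [mulVec, dotProduct]

@[simps]
noncomputable def LGammaLinearMap : Matrix (Fin n) (Fin n) ℝ →ₗ[ℝ] Matrix (Fin n) (Fin n) ℝ where
  toFun := LGamma σ
  map_add' W W' := by
    simp only [LGamma_eq, ← GammaLinearMap_apply, map_add, add_mulVec, Pi.add_def,
      ← diagonal_add]
    abel
  map_smul' c W := by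
    simp [LGamma_eq, ← GammaLinearMap_apply, smul_sub, smul_mulVec, diagonal_smul]

theorem GammaM_vecMulVec (u v : Fin n → ℝ) :
    GammaM σ (vecMulVec u v) = vecMulVec (sgn σ * u) (sgn σ * v) := by
  ext i j
  simp only [GammaM_apply, vecMulVec_apply, Pi.mul_apply]
  ring

theorem GammaM_one : GammaM σ 1 = 1 := by
  ext i j
  by_cases hij : i = j
  · subst hij
    simp [GammaM_apply, sgn_mul_self]
  · simp [GammaM_apply, hij]

theorem LGamma_of_sum_sgn_eq_zero (hs : ∑ l, sgn σ l = 0) (a b c : ℝ) :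
    LGamma σ (a • vecMulVec 1 1 + b • vecMulVec (sgn σ) (sgn σ) - c • 1)
      = (b * n) • 1 - b • vecMulVec 1 1 - a • vecMulVec (sgn σ) (sgn σ) := by
  have hΓ : GammaM σ (a • vecMulVec 1 1 + b • vecMulVec (sgn σ) (sgn σ) - c • 1)
      = a • vecMulVec (sgn σ) (sgn σ) + b • vecMulVec 1 1 - c • 1 := by
    simp only [← GammaLinearMap_apply, map_add, map_sub, map_smul]
    simp only [GammaLinearMap_apply, GammaM_vecMulVec, GammaM_one, sgn_mul_sgn, mul_one]
  have hrow : (a • vecMulVec (sgn σ) (sgn σ) + b • vecMulVec 1 1 - c • 1 : Matrix _ _ ℝ) *ᵥ 1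
      = (b * n - c) • 1 := by
    have h1 : sgn σ ⬝ᵥ 1 = 0 := by rw [dotProduct_one, hs]
    simp only [add_mulVec, sub_mulVec, smul_mulVec, vecMulVec_mulVec, op_smul_eq_smul,
      one_mulVec, h1, one_dotProduct_one, Fintype.card_fin]
    module
  rw [LGamma_eq, hΓ, hrow, diagonal_smul, diagonal_one']
  module

end

theorem expLGamma_eq_LGamma_expW (n k : ℕ) (p q : ℝ) (σ : Fin n → Bool) :
    expLGamma n k p q σ = LGamma σ (expW n k p q σ) := by
  simp only [expLGamma, expW, ← LGammaLinearMap_apply, map_sum, map_smul]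

section

variable {n : ℕ} (σ : Fin n → Bool)

theorem PiM_eq :
    PiM σ = 1 - (n : ℝ)⁻¹ • vecMulVec 1 1 - (n : ℝ)⁻¹ • vecMulVec (sgn σ) (sgn σ) := by
  rw [PiM, outer]
  congr
  ext i j
  simp

theorem PiM_mulVec (x : Fin n → ℝ) :
    PiM σ *ᵥ x = x - ((n : ℝ)⁻¹ * (1 ⬝ᵥ x)) • 1 - ((n : ℝ)⁻¹ * (sgn σ ⬝ᵥ x)) • sgn σ := by
  simp only [PiM_eq, sub_mulVec, one_mulVec, smul_mulVec, vecMulVec_mulVec, op_smul_eq_smul,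
    smul_smul]

theorem PiM_comp_equiv (e : Fin n ≃ Fin n) :
    PiM (σ ∘ e) = (PiM σ).submatrix e e := by
  ext i j
  simp [PiM, outer, sgn, Matrix.one_apply, e.injective.eq_iff]

variable {σ}

theorem PiM_mulVec_of_orthogonal {x : Fin n → ℝ} (h1 : 1 ⬝ᵥ x = 0) (hσ : sgn σ ⬝ᵥ x = 0) :
    PiM σ *ᵥ x = x := by
  simp [PiM_mulVec, h1, hσ]

theorem PiM_mulVec_one (hs : ∑ l, sgn σ l = 0) (hn : n ≠ 0) : PiM σ *ᵥ 1 = 0 := by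
  have h : sgn σ ⬝ᵥ 1 = 0 := by rw [dotProduct_one, hs]
  simp [PiM_mulVec, h, one_dotProduct_one, hn]

theorem PiM_mulVec_sgn (hs : ∑ l, sgn σ l = 0) (hn : n ≠ 0) : PiM σ *ᵥ sgn σ = 0 := by
  have h : 1 ⬝ᵥ sgn σ = 0 := by rw [one_dotProduct, hs]
  simp [PiM_mulVec, h, sgn_dotProduct_sgn, hn]

theorem PiM_mul_self (hs : ∑ l, sgn σ l = 0) (hn : n ≠ 0) : PiM σ * PiM σ = PiM σ := by
  nth_rewrite 2 [PiM_eq σ]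
  rw [Matrix.mul_sub, Matrix.mul_sub, Matrix.mul_one, Matrix.mul_smul, Matrix.mul_smul,
    mul_vecMulVec, mul_vecMulVec, PiM_mulVec_one hs hn, PiM_mulVec_sgn hs hn]
  simp

theorem PiM_mul_mul_PiM (hs : ∑ l, sgn σ l = 0) (hn : n ≠ 0) (a b c : ℝ) :
    PiM σ * (c • 1 - b • vecMulVec 1 1 - a • vecMulVec (sgn σ) (sgn σ)) * PiM σ
      = c • PiM σ := by
  rw [Matrix.mul_sub, Matrix.mul_sub, Matrix.mul_smul, Matrix.mul_smul, Matrix.mul_smul,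
    mul_vecMulVec, mul_vecMulVec, PiM_mulVec_one hs hn, PiM_mulVec_sgn hs hn, Matrix.mul_one]
  simp [PiM_mul_self hs hn]

end

theorem PiM_mul_expLGamma_mul_PiM {k : ℕ} (hk : 2 ≤ k) (p q : ℝ) (m : ℕ)
    (σ : Fin (2 * m) → Bool) (hσ : balanced σ) :
    PiM σ * expLGamma (2 * m) k p q σ * PiM σ
      = (((p - q) / 2) * ((2 * m : ℕ) : ℝ) * ((m - 2).choose (k - 2) : ℝ)) • PiM σ := by
  rcases Nat.eq_zero_or_pos m with rfl | hm
  · ext i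
    exact i.elim0
  have hs := sum_sgn_of_balanced σ hσ
  rw [expLGamma_eq_LGamma_expW, expW_eq_of_balanced p q σ hσ rfl hk,
    LGamma_of_sum_sgn_eq_zero σ hs, PiM_mul_mul_PiM hs (by omega)]
  congr 1
  ring

theorem lambda3_submatrix_equiv {N : ℕ} (M : Matrix (Fin N) (Fin N) ℝ) (e : Fin N ≃ Fin N) :
    lambda3 (M.submatrix e e) = lambda3 M := by
  have key : ∀ (M : Matrix (Fin N) (Fin N) ℝ) (e : Fin N ≃ Fin N) (r : ℝ),
      (∃ V : Submodule ℝ (Fin N → ℝ), Module.finrank ℝ V = N - 2 ∧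
        ∀ x ∈ V, r * (∑ i, x i ^ 2) ≤ x ⬝ᵥ (M.submatrix e e).mulVec x) →
      ∃ V : Submodule ℝ (Fin N → ℝ), Module.finrank ℝ V = N - 2 ∧
        ∀ x ∈ V, r * (∑ i, x i ^ 2) ≤ x ⬝ᵥ M.mulVec x := by
    rintro M e r ⟨V, hV, hr⟩
    let L := LinearEquiv.funCongrLeft ℝ ℝ e.symm
    refine ⟨V.map L.toLinearMap, by rw [LinearEquiv.finrank_map_eq, hV], ?_⟩
    rintro _ ⟨x, hx, rfl⟩
    show r * ∑ i, x (e.symm i) ^ 2 ≤ (x ∘ e.symm) ⬝ᵥ M *ᵥ (x ∘ e.symm)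
    rw [Equiv.sum_comp e.symm (fun i => x i ^ 2), comp_equiv_symm_dotProduct,
      ← submatrix_mulVec_equiv]
    exact hr x hx
  unfold lambda3
  congr 1
  ext r
  refine ⟨key M e r, fun h => key (M.submatrix e e) e.symm r ?_⟩
  simpa [Matrix.submatrix_submatrix] using h

theorem lambda3_smul_PiM_eq_of_balanced {n : ℕ} {σ τ : Fin n → Bool} (hσ : balanced σ)
    (hτ : balanced τ) (c : ℝ) : lambda3 (c • PiM τ) = lambda3 (c • PiM σ) := by
  obtain ⟨e, rfl⟩ := exists_equiv_comp_eq_of_balanced hσ hτ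
  rw [PiM_comp_equiv, show c • (PiM σ).submatrix e e = (c • PiM σ).submatrix e e from rfl,
    lambda3_submatrix_equiv]

theorem lambda3_eq_of_mulVec_eq_smul {N : ℕ} (hN : 4 < N) (M : Matrix (Fin N) (Fin N) ℝ) (c : ℝ)
    (V₀ : Submodule ℝ (Fin N → ℝ)) (hV₀ : Module.finrank ℝ V₀ = N - 2)
    (hM : ∀ x ∈ V₀, M *ᵥ x = c • x) :
    lambda3 M = c := by
  have hquad : ∀ x ∈ V₀, x ⬝ᵥ M *ᵥ x = c * ∑ i, x i ^ 2 := fun x hx => by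
    simp [hM x hx, dotProduct, sq, Finset.mul_sum, mul_left_comm]
  refine IsGreatest.csSup_eq ⟨⟨V₀, hV₀, fun x hx => (hquad x hx).ge⟩, ?_⟩
  rintro r ⟨V, hV, hr⟩
  have hmeet : ¬ Disjoint V V₀ := fun hdisj => by
    have := Submodule.finrank_add_finrank_le_of_disjoint hdisj
    rw [hV, hV₀, Module.finrank_fin_fun] at this
    omega
  obtain ⟨x, hxV, hxV₀, hx⟩ : ∃ x ∈ V, x ∈ V₀ ∧ x ≠ 0 := by
    simpa [Submodule.disjoint_def] using hmeet
  have hpos : 0 < ∑ i, x i ^ 2 := by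
    obtain ⟨i, hi⟩ := Function.ne_iff.mp hx
    exact Finset.sum_pos' (fun j _ => sq_nonneg (x j))
      ⟨i, Finset.mem_univ i, sq_pos_of_ne_zero (by simpa using hi)⟩
  exact le_of_mul_le_mul_right ((hr x hxV).trans (hquad x hxV₀).le) hpos

theorem finrank_ker_dotProduct_prod {N : ℕ} (u v : Fin N → ℝ) (hu : u ⬝ᵥ u ≠ 0)
    (hv : v ⬝ᵥ v ≠ 0) (huv : u ⬝ᵥ v = 0) :
    Module.finrank ℝ (LinearMap.ker ((dotProductBilin ℝ ℝ u).prod (dotProductBilin ℝ ℝ v)))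
      = N - 2 := by
  set f := (dotProductBilin ℝ ℝ u).prod (dotProductBilin ℝ ℝ v)
  have hsurj : Function.Surjective f := by
    rintro ⟨a, b⟩
    refine ⟨(a / (u ⬝ᵥ u)) • u + (b / (v ⬝ᵥ v)) • v, ?_⟩
    have hvu : v ⬝ᵥ u = 0 := by rwa [dotProduct_comm]
    simp [f, dotProduct_add, dotProduct_smul, huv, hvu, hu, hv]
  have h := LinearMap.finrank_range_add_finrank_ker f
  rw [LinearMap.range_eq_top.mpr hsurj, finrank_top, Module.finrank_prod, Module.finrank_self,
    Module.finrank_fin_fun] at h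
  omega

theorem lambda3_smul_PiM {n : ℕ} {σ : Fin n → Bool} (hs : ∑ l, sgn σ l = 0) (hn : 4 < n)
    (c : ℝ) : lambda3 (c • PiM σ) = c := by
  have hn' : (n : ℝ) ≠ 0 := by exact_mod_cast (by omega : n ≠ 0)
  refine lambda3_eq_of_mulVec_eq_smul hn _ c _
    (finrank_ker_dotProduct_prod 1 (sgn σ) (by simpa [one_dotProduct_one] using hn')
      (by rwa [sgn_dotProduct_sgn]) (by rw [one_dotProduct, hs])) fun x hx => ?_
  rw [LinearMap.mem_ker] at hx
  rw [smul_mulVec, PiM_mulVec_of_orthogonal (congrArg Prod.fst hx) (congrArg Prod.snd hx)]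

open Topology

theorem tendsto_sub_div_two_mul_sub (a b : ℝ) :
    Tendsto (fun m : ℕ => ((m : ℝ) - a) / (2 * m - b)) atTop (𝓝 (1 / 2)) := by
  have h : Tendsto (fun m : ℕ => (1 - a * (m : ℝ)⁻¹) / (2 - b * (m : ℝ)⁻¹)) atTop
      (𝓝 ((1 - a * 0) / (2 - b * 0))) :=
    ((tendsto_inv_atTop_nhds_zero_nat.const_mul a).const_sub 1).div
      ((tendsto_inv_atTop_nhds_zero_nat.const_mul b).const_sub 2) (by norm_num)
  rw [show (1 - a * 0) / (2 - b * 0) = (1 / 2 : ℝ) by norm_num] at h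
  refine h.congr' ?_
  filter_upwards [eventually_ne_atTop 0] with m hm
  have hm' : (m : ℝ) ≠ 0 := Nat.cast_ne_zero.mpr hm
  rw [← mul_div_mul_right _ _ hm']
  congr 1 <;> field_simp

theorem tendsto_descFactorial_div_descFactorial (a b r : ℕ) :
    Tendsto (fun m : ℕ => ((m - a).descFactorial r : ℝ) / (2 * m - b).descFactorial r)
      atTop (𝓝 ((1 / 2) ^ r)) := by
  have h := tendsto_finsetProd (Finset.range r) fun i _ =>
    tendsto_sub_div_two_mul_sub ((a + i : ℕ) : ℝ) ((b + i : ℕ) : ℝ)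
  rw [Finset.prod_const, Finset.card_range] at h
  refine h.congr' ?_
  filter_upwards [eventually_ge_atTop (a + b + r)] with m hm
  rw [Nat.descFactorial_eq_prod_range, Nat.descFactorial_eq_prod_range, Nat.cast_prod,
    Nat.cast_prod, ← Finset.prod_div_distrib]
  refine Finset.prod_congr rfl fun i hi => ?_
  have hi := Finset.mem_range.mp hi
  rw [Nat.sub_sub, Nat.sub_sub, Nat.cast_sub (by omega), Nat.cast_sub (by omega)]
  push_cast
  ring

theorem cast_choose_eq_descFactorial_div (n r : ℕ) :
    (n.choose r : ℝ) = n.descFactorial r / r.factorial := by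
  rw [Nat.descFactorial_eq_factorial_mul_choose, Nat.cast_mul]
  field_simp

theorem tendsto_mul_choose_div_choose {k : ℕ} (hk : 2 ≤ k) :
    Tendsto (fun m : ℕ => (m : ℝ) * (m - 2).choose (k - 2) / (2 * m - 1).choose (k - 1))
      atTop (𝓝 (((k : ℝ) - 1) / 2 ^ (k - 1))) := by
  obtain ⟨j, rfl⟩ : ∃ j, k = j + 2 := ⟨k - 2, by omega⟩
  have h := ((tendsto_sub_div_two_mul_sub 0 1).mul
    (tendsto_descFactorial_div_descFactorial 2 2 j)).const_mul ((j : ℝ) + 1)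
  rw [show ((j : ℝ) + 1) * (1 / 2 * (1 / 2) ^ j) = (((j + 2 : ℕ) : ℝ) - 1) / 2 ^ (j + 2 - 1) by
    rw [_root_.one_div_pow, show j + 2 - 1 = j + 1 by omega, pow_succ]
    push_cast
    field_simp
    ring] at h
  refine h.congr' ?_
  filter_upwards [eventually_ge_atTop (j + 2)] with m hm
  have h2m : 2 * m - 1 = (2 * m - 2) + 1 := by omega
  have hpos : 0 < ((2 * m - 2).descFactorial j : ℝ) := by
    exact_mod_cast Nat.descFactorial_pos.mpr (by omega)
  rw [show j + 2 - 2 = j by omega, show j + 2 - 1 = j + 1 by omega,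
    cast_choose_eq_descFactorial_div, cast_choose_eq_descFactorial_div, h2m,
    Nat.succ_descFactorial_succ, Nat.factorial_succ, Nat.cast_mul, Nat.cast_mul,
    Nat.cast_add_one, Nat.cast_sub (by omega)]
  push_cast
  field_simp
  ring

theorem pParam_sub_pParam_mul_div_log {k m : ℕ} (hm : 1 ≤ m) (α β : ℝ) :
    ((pParam k α (2 * m) - pParam k β (2 * m)) / 2) * ((2 * m : ℕ) : ℝ)
        * ((m - 2).choose (k - 2) : ℝ) / Real.log (2 * m)
      = (α - β) * ((m : ℝ) * (m - 2).choose (k - 2) / (2 * m - 1).choose (k - 1)) := by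
  have hlog : Real.log (2 * m) ≠ 0 := (Real.log_pos (by norm_cast; omega)).ne'
  simp only [pParam]
  push_cast
  field_simp

theorem exp_laplacian_formula_general (k : ℕ) (hk : 2 ≤ k) (α β : ℝ) :
    (∀ m : ℕ, ∀ σ : Fin (2 * m) → Bool, balanced σ →
      PiM σ * expLGamma (2 * m) k (pParam k α (2 * m)) (pParam k β (2 * m)) σ * PiM σ
        = (((pParam k α (2 * m) - pParam k β (2 * m)) / 2) * ((2 * m : ℕ) : ℝ) *
            ((m - 2).choose (k - 2) : ℝ)) • PiM σ) ∧
    (∃ err : ℕ → ℝ, Tendsto (fun m : ℕ => err m / Real.log (2 * m)) atTop (nhds 0) ∧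
      ∀ m : ℕ, ∀ σ : Fin (2 * m) → Bool, balanced σ →
        lambda3 (PiM σ * expLGamma (2 * m) k (pParam k α (2 * m)) (pParam k β (2 * m)) σ * PiM σ)
          = ((k : ℝ) - 1) / 2 ^ (k - 1) * (α - β) * Real.log (2 * m) + err m) := by
  set c : ℕ → ℝ := fun m => ((pParam k α (2 * m) - pParam k β (2 * m)) / 2)
    * ((2 * m : ℕ) : ℝ) * ((m - 2).choose (k - 2) : ℝ)
  set L := ((k : ℝ) - 1) / 2 ^ (k - 1) * (α - β)
  have hpart1 := fun m σ hσ =>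
    PiM_mul_expLGamma_mul_PiM hk (pParam k α (2 * m)) (pParam k β (2 * m)) m σ hσ
  refine ⟨hpart1, fun m => lambda3 (c m • PiM (halfLabel m)) - L * Real.log (2 * m), ?_,
    fun m σ hσ => ?_⟩
  · have h := ((tendsto_mul_choose_div_choose hk).const_mul (α - β)).sub_const L
    rw [mul_comm, sub_self] at h
    refine h.congr' ?_
    filter_upwards [eventually_ge_atTop 3] with m hm
    rw [lambda3_smul_PiM (sum_sgn_of_balanced _ (balanced_halfLabel m)) (by omega), sub_div,
      pParam_sub_pParam_mul_div_log (by omega),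
      mul_div_cancel_right₀ _ (Real.log_pos (by norm_cast; omega)).ne']
  · rw [hpart1 m σ hσ, lambda3_smul_PiM_eq_of_balanced (balanced_halfLabel m) hσ]
    ring

/-- For balanced `σ`, `Π (E L_Γ) Π = ((p-q)/2) n C(n/2-2, k-2) · Π`;
consequently `λ₃(Π (E L_Γ) Π) = ((k-1)/2^{k-1})(α-β) log n + o(log n)`. -/
theorem exp_laplacian_formula (k : ℕ) (hk : 2 ≤ k) (α β : ℝ) (hα : 0 < α) (hβ : 0 < β) :
    (∀ m : ℕ, ∀ σ : Fin (2 * m) → Bool, balanced σ →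
      PiM σ * expLGamma (2 * m) k (pParam k α (2 * m)) (pParam k β (2 * m)) σ * PiM σ
        = (((pParam k α (2 * m) - pParam k β (2 * m)) / 2) * ((2 * m : ℕ) : ℝ) *
            ((m - 2).choose (k - 2) : ℝ)) • PiM σ) ∧
    (∃ err : ℕ → ℝ, Tendsto (fun m : ℕ => err m / Real.log (2 * m)) atTop (nhds 0) ∧
      ∀ m : ℕ, ∀ σ : Fin (2 * m) → Bool, balanced σ →
        lambda3 (PiM σ * expLGamma (2 * m) k (pParam k α (2 * m)) (pParam k β (2 * m)) σ * PiM σ)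
          = ((k : ℝ) - 1) / 2 ^ (k - 1) * (α - β) * Real.log (2 * m) + err m) :=
  exp_laplacian_formula_general k hk α β
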